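/- arXiv:1701.09165 — 3 statements merged into one kernel-verified Lean document; each statement's English description precedes it below -/
import Mathlib

section
/- Over a field of characteristic 3, the coefficient a₂ of the binary quartic f = Σ_{i=0}^{4} a_i x^i z^{4−i} is an invariant of weight 2 under SL₂: for every M ∈ SL₂(k), writing f(M·(x,z)) = Σ a'_i x^i z^{4−i}, one has a'_2 = a₂. -/
/-!
Substituting `x ↦ p x + q z`, `z ↦ r x + s z` into `∑ aᵢ xⁱ z⁴⁻ⁱ`, the new coefficient of `x² z²`
is `6a₀r²s² + 3a₁(prs² + qr²s) + a₂(p²s² + 4pqrs + q²r²) + 3a₃(p²qs + pq²r) + 6a₄p²q²`.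
In characteristic 3 all terms but the `a₂` one vanish, and `p²s² + 4pqrs + q²r² = (ps - qr)²`,
which is `1` for a matrix of determinant one.
-/

open MvPolynomial Matrix Fin.NatCast

section BinaryForm

variable {R σ : Type*} [CommSemiring R]

theorem coeff_sum_C_mul_X_pow_mul_X_pow {u v : σ} (huv : u ≠ v) (b : ℕ → R) {n i : ℕ}
    (hi : i ≤ n) :
    coeff (Finsupp.single u i + Finsupp.single v (n - i))
      (∑ j ∈ Finset.range (n + 1), C (b j) * X u ^ j * X v ^ (n - j)) = b i := by
  classical
  simp only [X_pow_eq_monomial, C_mul_monomial, monomial_mul, mul_one, coeff_sum, coeff_monomial]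
  rw [Finset.sum_eq_single i (fun j _ hji => if_neg ?_) (fun h => by simp at h; omega), if_pos rfl]
  intro h
  exact hji (by simpa [huv] using DFunLike.congr_fun h u)

def quarticSubstCoeff (a : ℕ → R) (p q r s : R) : ℕ → R
  | 0 => a 0 * s ^ 4 + a 1 * q * s ^ 3 + a 2 * q ^ 2 * s ^ 2 + a 3 * q ^ 3 * s + a 4 * q ^ 4
  | 1 => 4 * a 0 * r * s ^ 3 + a 1 * (p * s ^ 3 + 3 * q * r * s ^ 2)
      + 2 * a 2 * (p * q * s ^ 2 + q ^ 2 * r * s) + a 3 * (3 * p * q ^ 2 * s + q ^ 3 * r)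
      + 4 * a 4 * p * q ^ 3
  | 2 => 6 * a 0 * r ^ 2 * s ^ 2 + 3 * a 1 * (p * r * s ^ 2 + q * r ^ 2 * s)
      + a 2 * (p ^ 2 * s ^ 2 + 4 * p * q * r * s + q ^ 2 * r ^ 2)
      + 3 * a 3 * (p ^ 2 * q * s + p * q ^ 2 * r) + 6 * a 4 * p ^ 2 * q ^ 2
  | 3 => 4 * a 0 * r ^ 3 * s + a 1 * (3 * p * r ^ 2 * s + q * r ^ 3)
      + 2 * a 2 * (p ^ 2 * r * s + p * q * r ^ 2) + a 3 * (p ^ 3 * s + 3 * p ^ 2 * q * r)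
      + 4 * a 4 * p ^ 3 * q
  | 4 => a 0 * r ^ 4 + a 1 * p * r ^ 3 + a 2 * p ^ 2 * r ^ 2 + a 3 * p ^ 3 * r + a 4 * p ^ 4
  | _ => 0

theorem quartic_linear_subst_eq (a : ℕ → R) (p q r s : R) (x z : MvPolynomial σ R) :
    ∑ i ∈ Finset.range 5, C (a i) * (C p * x + C q * z) ^ i * (C r * x + C s * z) ^ (4 - i)
      = ∑ j ∈ Finset.range 5, C (quarticSubstCoeff a p q r s j) * x ^ j * z ^ (4 - j) := by
  simp only [Finset.sum_range_succ, Finset.sum_range_zero, quarticSubstCoeff, map_add, map_mul,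
    map_pow, map_ofNat]
  ring

end BinaryForm

theorem quarticSubstCoeff_two_of_charP_three {R : Type*} [CommRing R] [CharP R 3] (a : ℕ → R)
    {p q r s : R} (h : p * s - q * r = 1) : quarticSubstCoeff a p q r s 2 = a 2 := by
  have h3 : (3 : R) = 0 := CharP.cast_eq_zero R 3
  simp only [quarticSubstCoeff]
  linear_combination (a 2 * (p * s - q * r + 1)) * h
    + (2 * a 0 * r ^ 2 * s ^ 2 + a 1 * (p * r * s ^ 2 + q * r ^ 2 * s) + 2 * a 2 * p * q * r * s
      + a 3 * (p ^ 2 * q * s + p * q ^ 2 * r) + 2 * a 4 * p ^ 2 * q ^ 2) * h3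

/-- In characteristic 3, the middle coefficient a₂ of a binary quartic
    f = Σ aᵢ xⁱ z^{4−i} is invariant under the full SL₂-action: for every
    M ∈ SL₂(k), writing f(M·(x,z)) = Σ a'ᵢ xⁱ z^{4−i}, one has a'₂ = a₂. -/
theorem quartic_middle_coeff_SL2_invariant {k : Type*} [Field k] [CharP k 3]
    (a : Fin 5 → k) (M : SpecialLinearGroup (Fin 2) k) :
    (let x : MvPolynomial (Fin 2) k := X 0
     let z : MvPolynomial (Fin 2) k := X 1
     let f : MvPolynomial (Fin 2) k :=
       ∑ i ∈ Finset.range 5, C (a i) * x ^ i * z ^ (4 - i)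
     let m : Matrix (Fin 2) (Fin 2) k := ↑M
     MvPolynomial.coeff (Finsupp.single 0 2 + Finsupp.single 1 2)
       (aeval ![C (m 0 0) * X 0 + C (m 0 1) * X 1,
                C (m 1 0) * X 0 + C (m 1 1) * X 1] f)) = a 2 := by
  obtain ⟨m, hdet⟩ := M
  rw [det_fin_two] at hdet
  simp only [map_sum, map_mul, map_pow, aeval_X, aeval_C, algebraMap_eq, cons_val_zero,
    cons_val_one]
  rw [quartic_linear_subst_eq (fun i => a i)]
  exact (coeff_sum_C_mul_X_pow_mul_X_pow (by decide) _ (by decide : 2 ≤ 4)).trans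
    (quarticSubstCoeff_two_of_charP_three _ hdet)
end

section
/- Over a field of characteristic 3, with f = Σ_{i=0}^{16} a_i x^i z^{16−i} a binary form of degree 16 and C = a₁₁ x⁶, C is not a covariant of f: for M = [[1,1],[0,1]] ∈ SL₂(k), the transformed polynomial C(M·f, M⁻¹·(x,z)) equals (x+2z)⁶(a₁₁ + a₁₄), which differs from C (as a polynomial in the a_i, x, z). -/
open MvPolynomial

/-!
The substitution `x ↦ x + z` sends the generic form `∑ aᵢ xⁱ z¹⁶⁻ⁱ` to one whose coefficient of
`xᵐ z¹⁶⁻ᵐ` is `∑ᵢ (i choose m) aᵢ`. For `m = 11` the binomials `(i choose 11)`, `11 ≤ i ≤ 16`,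
are `1, 12, 78, 364, 1365, 4368 ≡ 1, 0, 0, 1, 0, 0 (mod 3)`, so the transform of `a₁₁x⁶` is
`(a₁₁ + a₁₄)(x - z)⁶`, and `x - z = x + 2z` in characteristic 3. At `x = 0, z = -1` this
specialises to `a₁₁ + a₁₄ ≠ 0`, while `a₁₁x⁶` vanishes there.
-/

section BinaryForm

variable {R : Type*} [CommSemiring R]

noncomputable def binaryForm (n : ℕ) (c : ℕ → R) : MvPolynomial (Fin 2) R :=
  ∑ i ∈ Finset.range (n + 1), C (c i) * X 0 ^ i * X 1 ^ (n - i)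

lemma single_zero_add_single_one_eq_iff {m n p q : ℕ} :
    Finsupp.single (0 : Fin 2) m + Finsupp.single 1 n =
      Finsupp.single (0 : Fin 2) p + Finsupp.single 1 q ↔ m = p ∧ n = q := by
  refine ⟨fun h => ⟨?_, ?_⟩, by rintro ⟨rfl, rfl⟩; rfl⟩
  · simpa using DFunLike.congr_fun h 0
  · simpa using DFunLike.congr_fun h 1

lemma coeff_add_pow_mul_pow {n i : ℕ} (hi : i ≤ n) (m : ℕ) :
    coeff (Finsupp.single (0 : Fin 2) m + Finsupp.single 1 (n - m))
      ((X 0 + X 1 : MvPolynomial (Fin 2) R) ^ i * X 1 ^ (n - i)) = (i.choose m : R) := by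
  have hexpand : (X 0 + X 1 : MvPolynomial (Fin 2) R) ^ i * X 1 ^ (n - i) =
      ∑ j ∈ Finset.range (i + 1),
        monomial (Finsupp.single (0 : Fin 2) j + Finsupp.single 1 (n - j)) (i.choose j : R) := by
    rw [add_pow, Finset.sum_mul]
    refine Finset.sum_congr rfl fun j hj => ?_
    have hj : j ≤ i := Nat.lt_succ_iff.mp (Finset.mem_range.mp hj)
    rw [← map_natCast (C : R →+* MvPolynomial (Fin 2) R), X_pow_eq_monomial, X_pow_eq_monomial,
      X_pow_eq_monomial, mul_comm _ (C _), mul_assoc, mul_assoc, monomial_mul, monomial_mul,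
      C_mul_monomial, ← Finsupp.single_add, show i - j + (n - i) = n - j by omega,
      mul_one, mul_one, mul_one]
  rw [hexpand, coeff_sum]
  simp_rw [coeff_monomial, single_zero_add_single_one_eq_iff,
    and_iff_left_of_imp (fun h : _ = m => congrArg (n - ·) h), Finset.sum_ite_eq', Finset.mem_range]
  split_ifs with hm
  · rfl
  · rw [Nat.choose_eq_zero_of_lt (by omega), Nat.cast_zero]

lemma coeff_aeval_shear_binaryForm (n m : ℕ) (c : ℕ → R) :
    coeff (Finsupp.single (0 : Fin 2) m + Finsupp.single 1 (n - m))
      (aeval ![(X 0 : MvPolynomial (Fin 2) R) + X 1, X 1] (binaryForm n c)) =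
      ∑ i ∈ Finset.range (n + 1), (i.choose m : R) * c i := by
  rw [binaryForm, map_sum, coeff_sum]
  refine Finset.sum_congr rfl fun i hi => ?_
  have hi : i ≤ n := Nat.lt_succ_iff.mp (Finset.mem_range.mp hi)
  simp only [map_mul, map_pow, aeval_X, aeval_C, Matrix.cons_val_zero, Matrix.cons_val_one,
    algebraMap_eq]
  rw [mul_assoc, coeff_C_mul, coeff_add_pow_mul_pow hi, mul_comm]

end BinaryForm

section CharThree

variable {S : Type*} [CommRing S] [CharP S 3]

lemma sum_range_choose_eleven_mul (c : ℕ → S) :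
    ∑ i ∈ Finset.range 17, (i.choose 11 : S) * c i = c 11 + c 14 := by
  simp_rw [CharP.cast_eq_mod S 3 (Nat.choose _ 11)]
  simp [Finset.sum_range_succ, Nat.choose]

lemma sub_eq_add_two_mul_of_charP_three (a b : S) : a - b = a + 2 * b := by
  linear_combination (-b) * (by exact_mod_cast CharP.cast_eq_zero S 3 : (3 : S) = 0)

end CharThree

open Fin.NatCast in
/-- Counterexample to Hilbert's differential characterization in characteristic 3:
    for the generic binary form f of degree 16 and C = a₁₁x⁶, the transform of C
    by M = [[1,1],[0,1]] ∈ SL₂ (coefficients a'ᵢ of f(x+z,z), variables (x,z) ↦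
    M⁻¹(x,z) = (x−z,z) = (x+2z,z)) equals (x+2z)⁶(a₁₁+a₁₄), which differs from C. -/
theorem not_covariant_char3 {k : Type*} [Field k] [CharP k 3] :
    (let f : MvPolynomial (Fin 2) (MvPolynomial (Fin 17) k) :=
       ∑ i ∈ Finset.range 17, C (X (i : Fin 17)) * (X 0) ^ i * (X 1) ^ (16 - i)
     -- coefficients of f(x + z, z)
     let a' : ℕ → MvPolynomial (Fin 17) k := fun i =>
       MvPolynomial.coeff (Finsupp.single 0 i + Finsupp.single 1 (16 - i))
         (aeval ![(X 0 : MvPolynomial (Fin 2) (MvPolynomial (Fin 17) k)) + X 1,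
                  X 1] f)
     let Ctrans : MvPolynomial (Fin 2) (MvPolynomial (Fin 17) k) :=
       C (a' 11) * ((X 0 : MvPolynomial (Fin 2) (MvPolynomial (Fin 17) k)) - X 1) ^ 6
     Ctrans = C ((X 11 : MvPolynomial (Fin 17) k) + X 14) *
         ((X 0 : MvPolynomial (Fin 2) (MvPolynomial (Fin 17) k)) + 2 * X 1) ^ 6 ∧
       Ctrans ≠ C ((X 11 : MvPolynomial (Fin 17) k)) *
         (X 0 : MvPolynomial (Fin 2) (MvPolynomial (Fin 17) k)) ^ 6) := by
  intro f a' Ctrans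
  have ha : a' 11 = X 11 + X 14 :=
    (coeff_aeval_shear_binaryForm 16 11 fun i => X (i : Fin 17)).trans
      (sum_range_choose_eleven_mul _)
  have hX : X 11 + X 14 ≠ (0 : MvPolynomial (Fin 17) k) := by
    intro h
    simpa using congrArg (coeff (Finsupp.single 11 1)) h
  refine ⟨by rw [← sub_eq_add_two_mul_of_charP_three, ← ha], fun h => hX ?_⟩
  simpa [Ctrans, ha] using congrArg (eval ![0, -1]) h
end

section
/- Over F₅, let f = Σ_{i=0}^{6} a_i x^i z^{6−i} be the generic binary sextic. The covariant (1/z³)·∂³(f²)/∂x³ is not in the F₅-subalgebra of k[a₀,…,a₆][x,z] generated by f and C₁ = (1/z²)·∂²f/∂x². Specifically, (1/z³)∂³(f²)/∂x³ is homogeneous of degree 2 in the aᵢ; the degree-2 part of the subalgebra is spanned by f², f·C₁, C₁², whose coefficients of z⁶ (the x-free terms) are a₀², 2a₀a₂, 4a₂² respectively, none of whose linear combinations can equal the z⁶-coefficient 4a₀a₃ + 4a₁a₂ of (1/z³)∂³(f²)/∂x³. -/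
/-!
Specialise the coefficients to `a₁ = t`, `a₂ = 1` and all other `aᵢ = 0`, and the variables to
`x = 0`, `z = 1`. This is an `F₅`-algebra map `F₅[a₀, …, a₆][x, z] → F₅[t]` sending `f` to `0` and
`C₁` to `2`, hence the whole subalgebra generated by `f` and `C₁` to constants, whereas it sends
the covariant `(1/z³)∂³(f²)/∂x³` to `12 t`, which is not constant in characteristic `5`.
-/

open MvPolynomial

namespace MvPolynomial

variable {R S σ : Type*} [CommSemiring R] [CommSemiring S]

theorem pderiv_ofNat (i : σ) (n : ℕ) [n.AtLeastTwo] :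
    pderiv i (ofNat(n) : MvPolynomial σ R) = 0 :=
  (pderiv i).map_natCast n

theorem map_iterate_pderiv (ψ : R →+* S) (i : σ) (n : ℕ) (p : MvPolynomial σ R) :
    map ψ ((pderiv i)^[n] p) = (pderiv i)^[n] (map ψ p) := by
  induction n with
  | zero => rfl
  | succ n ih =>
    rw [Function.iterate_succ_apply', Function.iterate_succ_apply', ← ih, pderiv_map]

theorem eval_map_of_iterate_pderiv_eq_X_pow_mul (ψ : R →+* S) (x : σ → S) {i j : σ} {k : ℕ}
    {g q : MvPolynomial σ R} (h : (pderiv i)^[k] g = X j ^ k * q) (hj : x j = 1) :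
    eval x (map ψ q) = eval x ((pderiv i)^[k] (map ψ g)) := by
  rw [← map_iterate_pderiv, h]
  simp [hj]

end MvPolynomial

theorem Algebra.notMem_adjoin_of_map {R A B : Type*} [CommSemiring R] [Semiring A] [Semiring B]
    [Algebra R A] [Algebra R B] (φ : A →ₐ[R] B) (S : Subalgebra R B) {s : Set A}
    (hs : ∀ a ∈ s, φ a ∈ S) {p : A} (hp : φ p ∉ S) : p ∉ Algebra.adjoin R s :=
  fun h => hp (Algebra.adjoin_le (S := S.comap φ) hs h)

theorem Polynomial.C_mul_X_notMem_bot {R : Type*} [CommSemiring R] {a : R} (ha : a ≠ 0) :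
    Polynomial.C a * Polynomial.X ∉ (⊥ : Subalgebra R (Polynomial R)) := by
  rintro ⟨r, hr⟩
  exact ha (by simpa using congrArg (Polynomial.coeff · 1) hr.symm)

namespace SexticCovariant

section SpecializedSextic

variable {R : Type*} [CommRing R] (t : R)

noncomputable def specializedSextic : MvPolynomial (Fin 2) R :=
  C t * X 0 * X 1 ^ 5 + X 0 ^ 2 * X 1 ^ 4

theorem iterate_pderiv_two_specializedSextic : (pderiv 0)^[2] (specializedSextic t) = X 1 ^ 4 * 2 := by
  simp [specializedSextic, pderiv_X, Derivation.leibniz_pow, pderiv_ofNat]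

theorem iterate_pderiv_three_specializedSextic_sq :
    (pderiv 0)^[3] (specializedSextic t ^ 2) = 12 * C t * X 1 ^ 9 + 24 * X 0 * X 1 ^ 8 := by
  simp only [specializedSextic, Function.iterate_succ, Function.iterate_zero, id_eq, Function.comp_apply,
    Derivation.leibniz_pow, Nat.add_one_sub_one, pow_one, map_add, Derivation.leibniz, pderiv_X,
    Pi.single_eq_of_ne one_ne_zero, smul_eq_mul, mul_zero, Pi.single_eq_same, mul_one,
    derivation_C, add_zero, zero_add, nsmul_eq_mul, Nat.cast_ofNat, pderiv_ofNat]
  ring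

end SpecializedSextic

open Polynomial (X) in
noncomputable def specialization : MvPolynomial (Fin 7) (ZMod 5) →ₐ[ZMod 5] Polynomial (ZMod 5) :=
  aeval ![0, X, 1, 0, 0, 0, 0]

theorem map_specialization_genericSextic :
    map specialization.toRingHom
      (∑ i ∈ Finset.range 7, C (X (Fin.ofNat 7 i)) * X 0 ^ i * X 1 ^ (6 - i) :
        MvPolynomial (Fin 2) (MvPolynomial (Fin 7) (ZMod 5))) = specializedSextic Polynomial.X := by
  simp [Finset.sum_range_succ, specialization, specializedSextic, -Fin.ofNat_eq_cast, Fin.ofNat]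

end SexticCovariant

open SexticCovariant in
/-- Over F₅, for the generic binary sextic f, the covariant (1/z³)∂³(f²)/∂x³ is
    not in the subalgebra generated by f and C₁ = (1/z²)∂²f/∂x². -/
theorem sextic_new_covariant_not_in_subalgebra :
    (let f : MvPolynomial (Fin 2) (MvPolynomial (Fin 7) (ZMod 5)) :=
       ∑ i ∈ Finset.range 7, C (X (Fin.ofNat 7 i)) * (X 0) ^ i * (X 1) ^ (6 - i)
     ∀ C₁ P : MvPolynomial (Fin 2) (MvPolynomial (Fin 7) (ZMod 5)),
       (⇑(pderiv (0 : Fin 2)))^[2] f = (X 1) ^ 2 * C₁ →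
       (⇑(pderiv (0 : Fin 2)))^[3] (f ^ 2) = (X 1) ^ 3 * P →
       P ∉ Algebra.adjoin (ZMod 5)
         ({f, C₁} : Set (MvPolynomial (Fin 2) (MvPolynomial (Fin 7) (ZMod 5))))) := by
  intro f C₁ P hC₁ hP
  let x : Fin 2 → Polynomial (ZMod 5) := ![0, 1]
  have hφ : ∀ q, aevalTower specialization x q = eval x (map specialization.toRingHom q) :=
    fun q => (eval_map _ _ _).symm
  have hf : map specialization.toRingHom f = specializedSextic Polynomial.X :=
    map_specialization_genericSextic
  refine Algebra.notMem_adjoin_of_map (aevalTower specialization x) ⊥ ?_ ?_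
  · rintro a (rfl | rfl)
    · rw [hφ, hf]
      simp [specializedSextic, x]
    · rw [hφ, eval_map_of_iterate_pderiv_eq_X_pow_mul _ x hC₁ rfl, hf,
        iterate_pderiv_two_specializedSextic]
      simp [x]
  · rw [hφ, eval_map_of_iterate_pderiv_eq_X_pow_mul _ x hP rfl, map_pow, hf,
      iterate_pderiv_three_specializedSextic_sq]
    have h12 := Polynomial.C_mul_X_notMem_bot (a := (12 : ZMod 5)) (by decide)
    rw [map_ofNat] at h12
    simpa [x] using h12
end
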